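/- arXiv:2504.20638 — 4 statements merged into one kernel-verified Lean document; each statement's English description precedes it below -/
import Mathlib

section
/- A finite-dimensional Poisson algebra P is nilpotent (as a dialgebra, i.e., the lower central series P^1 = P, P^{n+1} = P^n·P + [P^n,P] terminates at 0) if and only if P is both associatively nilpotent and Lie nilpotent. -/
/-!  Framework: dialgebras and Poisson algebras as bilinear structures on a module. -/

variable {F P : Type*} [Field F] [AddCommGroup P] [Module F P]

/-- A dialgebra: a vector space with two bilinear multiplications. -/
structure Dialgebra (F P : Type*) [Field F] [AddCommGroup P] [Module F P] where
  mul : P →ₗ[F] P →ₗ[F] P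
  bracket : P →ₗ[F] P →ₗ[F] P

namespace Dialgebra

variable (D : Dialgebra F P)

/-- Span of the set of products `a·b`, `a ∈ A`, `b ∈ B`. -/
def pmul (A B : Submodule F P) : Submodule F P :=
  Submodule.span F (Set.image2 (fun a b => D.mul a b) (A : Set P) (B : Set P))

/-- Span of the set of brackets `[a,b]`, `a ∈ A`, `b ∈ B`. -/
def pbra (A B : Submodule F P) : Submodule F P :=
  Submodule.span F (Set.image2 (fun a b => D.bracket a b) (A : Set P) (B : Set P))

/-- `A·B + [A,B]`. -/
def psq (A B : Submodule F P) : Submodule F P := D.pmul A B ⊔ D.pbra A B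

/-- A subalgebra: a subspace closed under both products. -/
def IsSubalgebra (A : Submodule F P) : Prop := D.psq A A ≤ A

/-- An ideal of the dialgebra. -/
def IsIdeal (A : Submodule F P) : Prop :=
  D.pmul A ⊤ ≤ A ∧ D.pmul ⊤ A ≤ A ∧ D.pbra A ⊤ ≤ A ∧ D.pbra ⊤ A ≤ A

/-- `A` is an ideal of the subalgebra `U`. -/
def IsIdealIn (A U : Submodule F P) : Prop :=
  A ≤ U ∧ D.pmul A U ≤ A ∧ D.pmul U A ≤ A ∧ D.pbra A U ≤ A ∧ D.pbra U A ≤ A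

/-- Lower central series of `B`: `B^1 = B`, `B^{n+1} = B^n·B + [B^n,B]`. -/
def lcs (B : Submodule F P) : ℕ → Submodule F P
  | 0 => B
  | n + 1 => D.psq (lcs B n) B

/-- `B` is nilpotent as a dialgebra. -/
def IsNilpotentSub (B : Submodule F P) : Prop := ∃ n, D.lcs B n = ⊥

/-- Derived series of `B`. -/
def ders (B : Submodule F P) : ℕ → Submodule F P
  | 0 => B
  | n + 1 => D.psq (ders B n) (ders B n)

/-- `B` is solvable as a dialgebra. -/
def IsSolvableSub (B : Submodule F P) : Prop := ∃ n, D.ders B n = ⊥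

/-- Associative powers: `apow B n = B_A^{n+1}`, i.e. `apow B 0 = B_A^1 = B`. -/
def apow (B : Submodule F P) : ℕ → Submodule F P
  | 0 => B
  | n + 1 => D.pmul (apow B n) B

/-- Lie powers: `lpow B n = B_L^{n+1}`. -/
def lpow (B : Submodule F P) : ℕ → Submodule F P
  | 0 => B
  | n + 1 => D.pbra (lpow B n) B

/-- Associative nilpotency of `B`. -/
def AssocNilpotent (B : Submodule F P) : Prop := ∃ n, D.apow B n = ⊥

/-- Lie nilpotency of `B`. -/
def LieNilpotent (B : Submodule F P) : Prop := ∃ n, D.lpow B n = ⊥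

/-- `mulPows B X n = X·B_A^n` (with the convention that it is `X` for `n = 0`). -/
def mulPows (B X : Submodule F P) : ℕ → Submodule F P
  | 0 => X
  | n + 1 => D.pmul (mulPows B X n) B

/-- `M` is a maximal (proper) subalgebra of the subalgebra `U`. -/
def IsMaximalSubalgebraIn (U M : Submodule F P) : Prop :=
  D.IsSubalgebra M ∧ M < U ∧ ∀ K, D.IsSubalgebra K → M ≤ K → K ≤ U → K = M ∨ K = U

/-- Frattini subalgebra of the subalgebra `U`: intersection of its maximal subalgebras. -/
def frattiniIn (U : Submodule F P) : Submodule F P :=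
  U ⊓ sInf {M | D.IsMaximalSubalgebraIn U M}

/-- Frattini ideal of the subalgebra `U`: largest ideal of `U` inside `frattiniIn U`. -/
def phiIn (U : Submodule F P) : Submodule F P :=
  sSup {I | D.IsIdealIn I U ∧ I ≤ D.frattiniIn U}

/-- Frattini subalgebra of the dialgebra. -/
def frattini : Submodule F P := D.frattiniIn ⊤

/-- Frattini ideal of the dialgebra. -/
def phi : Submodule F P := sSup {I | D.IsIdeal I ∧ I ≤ D.frattini}

/-- Minimal ideal. -/
def IsMinimalIdeal (A : Submodule F P) : Prop :=
  D.IsIdeal A ∧ A ≠ ⊥ ∧ ∀ I, D.IsIdeal I → I ≤ A → I = ⊥ ∨ I = A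

/-- Zero (trivial-multiplication) subspace. -/
def IsZeroAlg (A : Submodule F P) : Prop := D.pmul A A = ⊥ ∧ D.pbra A A = ⊥

/-- Zero socle: sum of the minimal zero ideals. -/
def zsoc : Submodule F P := sSup {A | D.IsMinimalIdeal A ∧ D.IsZeroAlg A}

/-- Socle: sum of the minimal ideals. -/
def soc : Submodule F P := sSup {A | D.IsMinimalIdeal A}

/-- Annihilator of `B` in the algebra. -/
def annih (B : Submodule F P) : Submodule F P where
  carrier := {x | ∀ b ∈ B, D.mul x b = 0 ∧ D.bracket x b = 0}
  add_mem' := by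
    intro x y hx hy b hb
    have h1 := hx b hb; have h2 := hy b hb
    constructor <;> simp [map_add, LinearMap.add_apply, h1.1, h1.2, h2.1, h2.2]
  zero_mem' := by intro b hb; simp
  smul_mem' := by
    intro c x hx b hb
    have h := hx b hb
    constructor <;> simp [map_smul, LinearMap.smul_apply, h.1, h.2]

/-- `R` is the solvable radical: the largest solvable ideal. -/
def IsRadical (R : Submodule F P) : Prop :=
  D.IsIdeal R ∧ D.IsSolvableSub R ∧ ∀ I, D.IsIdeal I → D.IsSolvableSub I → I ≤ R

/-- `N` is the nilradical: the largest nilpotent ideal. -/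
def IsNilradical (N : Submodule F P) : Prop :=
  D.IsIdeal N ∧ D.IsNilpotentSub N ∧ ∀ I, D.IsIdeal I → D.IsNilpotentSub I → I ≤ N

end Dialgebra

/-- A Poisson algebra: commutative associative product and Lie bracket linked by the Leibniz rule. -/
structure PoissonAlgebra (F P : Type*) [Field F] [AddCommGroup P] [Module F P]
    extends Dialgebra F P where
  mul_comm : ∀ x y, mul x y = mul y x
  mul_assoc : ∀ x y z, mul (mul x y) z = mul x (mul y z)
  lie_self : ∀ x, bracket x x = 0
  leibniz_lie : ∀ x y z, bracket x (bracket y z) = bracket (bracket x y) z + bracket y (bracket x z)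
  leibniz : ∀ x y z, bracket (mul x y) z = mul (bracket x z) y + mul x (bracket y z)

/-! By the Leibniz rule `[x·y, z] = [x, z]·y + x·[y, z]`, bracketing a product of Lie words with an
element raises the Lie degree of one factor. Hence `P^{n+1}` is spanned by products `u₀ ⋯ u_p` of
`p + 1` factors `uᵢ ∈ P_L^{qᵢ+1}` with `p + ∑ qᵢ = n`. If `P_A^{m+1} = 0` and `P_L^{k+1} = 0`, such a
product vanishes as soon as `p ≥ m` or some `qᵢ ≥ k`, and for `n = m k + m` one of the two happens. -/

namespace Dialgebra

variable (D : Dialgebra F P)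

theorem pmul_eq_map₂ (A B : Submodule F P) : D.pmul A B = Submodule.map₂ D.mul A B :=
  (Submodule.map₂_eq_span_image2 _ _ _).symm

theorem pbra_eq_map₂ (A B : Submodule F P) : D.pbra A B = Submodule.map₂ D.bracket A B :=
  (Submodule.map₂_eq_span_image2 _ _ _).symm

variable {D}

theorem mul_mem_pmul {A B : Submodule F P} {a b : P} (ha : a ∈ A) (hb : b ∈ B) :
    D.mul a b ∈ D.pmul A B :=
  D.pmul_eq_map₂ A B ▸ Submodule.apply_mem_map₂ _ ha hb

theorem bracket_mem_pbra {A B : Submodule F P} {a b : P} (ha : a ∈ A) (hb : b ∈ B) :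
    D.bracket a b ∈ D.pbra A B :=
  D.pbra_eq_map₂ A B ▸ Submodule.apply_mem_map₂ _ ha hb

theorem pmul_le_iff {A B T : Submodule F P} :
    D.pmul A B ≤ T ↔ ∀ a ∈ A, ∀ b ∈ B, D.mul a b ∈ T :=
  D.pmul_eq_map₂ A B ▸ Submodule.map₂_le

theorem pbra_le_iff {A B T : Submodule F P} :
    D.pbra A B ≤ T ↔ ∀ a ∈ A, ∀ b ∈ B, D.bracket a b ∈ T :=
  D.pbra_eq_map₂ A B ▸ Submodule.map₂_le

theorem pmul_mono {A A' B B' : Submodule F P} (hA : A ≤ A') (hB : B ≤ B') :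
    D.pmul A B ≤ D.pmul A' B' := by
  simpa only [pmul_eq_map₂] using Submodule.map₂_le_map₂ hA hB

theorem pbra_mono {A A' B B' : Submodule F P} (hA : A ≤ A') (hB : B ≤ B') :
    D.pbra A B ≤ D.pbra A' B' := by
  simpa only [pbra_eq_map₂] using Submodule.map₂_le_map₂ hA hB

variable (D)

theorem pmul_bot_left (B : Submodule F P) : D.pmul ⊥ B = ⊥ := by
  rw [pmul_eq_map₂, Submodule.map₂_bot_left]

theorem pmul_bot_right (A : Submodule F P) : D.pmul A ⊥ = ⊥ := by
  rw [pmul_eq_map₂, Submodule.map₂_bot_right]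

theorem pmul_iSup_left {ι : Sort*} (A : ι → Submodule F P) (B : Submodule F P) :
    D.pmul (⨆ i, A i) B = ⨆ i, D.pmul (A i) B := by
  simp only [pmul_eq_map₂, Submodule.map₂_iSup_left]

theorem pbra_iSup_left {ι : Sort*} (A : ι → Submodule F P) (B : Submodule F P) :
    D.pbra (⨆ i, A i) B = ⨆ i, D.pbra (A i) B := by
  simp only [pbra_eq_map₂, Submodule.map₂_iSup_left]

theorem apow_le_lcs (B : Submodule F P) : ∀ n, D.apow B n ≤ D.lcs B n
  | 0 => le_rfl
  | n + 1 => (pmul_mono (apow_le_lcs B n) le_rfl).trans le_sup_left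

theorem lpow_le_lcs (B : Submodule F P) : ∀ n, D.lpow B n ≤ D.lcs B n
  | 0 => le_rfl
  | n + 1 => (pbra_mono (lpow_le_lcs B n) le_rfl).trans le_sup_right

theorem apow_antitone {B : Submodule F P} (hB : D.pmul B B ≤ B) : Antitone (D.apow B) := by
  refine antitone_nat_of_succ_le fun n => ?_
  induction n with
  | zero => exact hB
  | succ n ih => exact pmul_mono ih le_rfl

theorem lpow_antitone {B : Submodule F P} (hB : D.pbra B B ≤ B) : Antitone (D.lpow B) := by
  refine antitone_nat_of_succ_le fun n => ?_
  induction n with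
  | zero => exact hB
  | succ n ih => exact pbra_mono ih le_rfl

/-- `lpowProd D p q` is spanned by the left-normed products `u₀ ⋯ u_p` with `uᵢ ∈ lpow ⊤ qᵢ`
and `∑ qᵢ = q`. -/
def lpowProd : ℕ → ℕ → Submodule F P
  | 0, q => D.lpow ⊤ q
  | p + 1, q => ⨆ (i) (j) (_ : i + j = q), D.pmul (lpowProd p i) (D.lpow ⊤ j)

theorem lpowProd_succ (p q : ℕ) :
    D.lpowProd (p + 1) q = ⨆ (i) (j) (_ : i + j = q), D.pmul (D.lpowProd p i) (D.lpow ⊤ j) :=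
  rfl

theorem pmul_lpowProd_le (p i j : ℕ) :
    D.pmul (D.lpowProd p i) (D.lpow ⊤ j) ≤ D.lpowProd (p + 1) (i + j) :=
  le_iSup₂_of_le i j (le_iSup_of_le rfl le_rfl)

theorem lpowProd_le_apow : ∀ p q, D.lpowProd p q ≤ D.apow ⊤ p
  | 0, _ => le_top
  | p + 1, _ => iSup₂_le fun i _ => iSup_le fun _ => pmul_mono (lpowProd_le_apow p i) le_top

theorem lpowProd_eq_bot {k : ℕ} (hk : D.lpow ⊤ k = ⊥) :
    ∀ p q, (p + 1) * k ≤ q → D.lpowProd p q = ⊥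
  | 0, q, hq => eq_bot_mono (D.lpow_antitone le_top (by omega)) hk
  | p + 1, q, hq => by
    refine le_bot_iff.1 (iSup₂_le fun i j => iSup_le fun hij => ?_)
    by_cases hi : (p + 1) * k ≤ i
    · rw [lpowProd_eq_bot hk p i hi, pmul_bot_left]
    · have hj : k ≤ j := by rw [add_one_mul] at hq; omega
      rw [eq_bot_mono (D.lpow_antitone le_top hj) hk, pmul_bot_right]

end Dialgebra

namespace PoissonAlgebra

open Dialgebra

variable (Q : PoissonAlgebra F P)

theorem pbra_pmul_le (A B C : Submodule F P) :
    Q.pbra (Q.pmul A B) C ≤ Q.pmul (Q.pbra A C) B ⊔ Q.pmul A (Q.pbra B C) := by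
  refine pbra_le_iff.2 fun x hx c hc => ?_
  have hAB : Q.pmul A B ≤
      (Q.pmul (Q.pbra A C) B ⊔ Q.pmul A (Q.pbra B C)).comap (Q.bracket.flip c) := by
    refine pmul_le_iff.2 fun a ha b hb => ?_
    rw [Submodule.mem_comap, LinearMap.flip_apply, Q.leibniz]
    exact add_mem (Submodule.mem_sup_left (mul_mem_pmul (bracket_mem_pbra ha hc) hb))
      (Submodule.mem_sup_right (mul_mem_pmul ha (bracket_mem_pbra hb hc)))
  exact hAB hx

theorem pbra_lpowProd_le : ∀ p q, Q.pbra (Q.lpowProd p q) ⊤ ≤ Q.lpowProd p (q + 1)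
  | 0, _ => le_rfl
  | p + 1, q => by
    rw [lpowProd_succ]
    simp only [pbra_iSup_left, iSup_le_iff]
    rintro i j rfl
    refine (Q.pbra_pmul_le _ _ _).trans (sup_le ?_ ?_)
    · refine (pmul_mono (pbra_lpowProd_le p i) le_rfl).trans ?_
      simpa only [add_right_comm] using Q.pmul_lpowProd_le p (i + 1) j
    · exact Q.pmul_lpowProd_le p i (j + 1)

theorem lcs_le_iSup_lpowProd :
    ∀ n, Q.lcs ⊤ n ≤ ⨆ (p) (q) (_ : p + q = n), Q.lpowProd p q
  | 0 => le_iSup₂_of_le 0 0 (le_iSup_of_le rfl le_rfl)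
  | n + 1 => by
    refine sup_le ?_ ?_
    · refine (pmul_mono (lcs_le_iSup_lpowProd n) le_rfl).trans ?_
      simp only [pmul_iSup_left, iSup_le_iff]
      rintro p q rfl
      exact (Q.pmul_lpowProd_le p q 0).trans
        (le_iSup₂_of_le (p + 1) q (le_iSup_of_le (by omega) le_rfl))
    · refine (pbra_mono (lcs_le_iSup_lpowProd n) le_rfl).trans ?_
      simp only [pbra_iSup_left, iSup_le_iff]
      rintro p q rfl
      exact (Q.pbra_lpowProd_le p q).trans
        (le_iSup₂_of_le p (q + 1) (le_iSup_of_le (by omega) le_rfl))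

end PoissonAlgebra

theorem poisson_nilpotent_iff_general {F P : Type*} [Field F] [AddCommGroup P] [Module F P]
    (Q : PoissonAlgebra F P) :
    Q.toDialgebra.IsNilpotentSub ⊤ ↔
      Q.toDialgebra.AssocNilpotent ⊤ ∧ Q.toDialgebra.LieNilpotent ⊤ := by
  constructor
  · rintro ⟨n, hn⟩
    exact ⟨⟨n, eq_bot_mono (Q.apow_le_lcs ⊤ n) hn⟩, ⟨n, eq_bot_mono (Q.lpow_le_lcs ⊤ n) hn⟩⟩
  · rintro ⟨⟨m, hm⟩, ⟨k, hk⟩⟩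
    refine ⟨m * k + m, eq_bot_mono (Q.lcs_le_iSup_lpowProd _) ?_⟩
    refine le_bot_iff.1 (iSup₂_le fun p q => iSup_le fun hpq => le_of_eq ?_)
    rcases le_or_gt m p with hmp | hpm
    · exact eq_bot_mono ((Q.lpowProd_le_apow p q).trans (Q.apow_antitone le_top hmp)) hm
    · exact Q.lpowProd_eq_bot hk p q (by nlinarith)

/-- A finite-dimensional Poisson algebra is nilpotent iff it is both associatively
and Lie nilpotent. -/
theorem poisson_nilpotent_iff {F P : Type*} [Field F] [AddCommGroup P] [Module F P]
    [FiniteDimensional F P] (Q : PoissonAlgebra F P) :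
    Q.toDialgebra.IsNilpotentSub ⊤ ↔
      Q.toDialgebra.AssocNilpotent ⊤ ∧ Q.toDialgebra.LieNilpotent ⊤ :=
  poisson_nilpotent_iff_general Q
end

section
/- Let P be a Poisson algebra and a ∈ P. Then the Fitting null component E_P^A(a) = {x ∈ P : (P_a)^n(x) = 0 for some n}, where P_a(y) = a·y, is a Poisson subalgebra of P, i.e., closed under both · and [·,·]. -/
/-!  Framework: dialgebras and Poisson algebras as bilinear structures on a module. -/

variable {F P : Type*} [Field F] [AddCommGroup P] [Module F P]

/-! The set `E` is the generalized `0`-eigenspace of `L_a = Q.mul a`, so it is a subspace. Right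
multiplication by `y` commutes with `L_a`, hence preserves `E`. Right bracketing `D = [·, y]` does
not, but by the Leibniz rule `D L_a - L_a D = L_{[a,y]}`, which commutes with `L_a`; then
`D L_a^(n+1) - L_a^(n+1) D = (n+1) L_{[a,y]} L_a^n`, so `D` maps `ker L_a^n` into `ker L_a^(n+1)`. -/

theorem mul_pow_succ_sub_pow_succ_mul {R : Type*} [Ring R] {a b : R}
    (hb : Commute b (a * b - b * a)) (n : ℕ) :
    a * b ^ (n + 1) - b ^ (n + 1) * a = (n + 1) • ((a * b - b * a) * b ^ n) := by
  induction n with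
  | zero => simp
  | succ n ih =>
    have split : a * b ^ (n + 2) - b ^ (n + 2) * a
        = (a * b ^ (n + 1) - b ^ (n + 1) * a) * b + b ^ (n + 1) * (a * b - b * a) := by
      noncomm_ring
    rw [split, ih, smul_mul_assoc, mul_assoc, ← pow_succ, (hb.pow_left (n + 1)).eq,
      succ_nsmul _ (n + 1)]

namespace Module.End

variable {R M : Type*} [CommRing R] [AddCommGroup M] [Module R M]

theorem mapsTo_maxGenEigenspace_of_commute_commutator {f g : End R M}
    (h : Commute f (g * f - f * g)) (μ : R) :
    Set.MapsTo g (f.maxGenEigenspace μ) (f.maxGenEigenspace μ) := by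
  set f' := f - μ • (1 : End R M)
  have hcomm : g * f' - f' * g = g * f - f * g := by
    simp only [f', mul_sub, sub_mul, mul_smul_comm, smul_mul_assoc, mul_one, one_mul]
    abel
  have hf' : Commute f' (g * f' - f' * g) := by
    rw [hcomm]; exact h.sub_left ((Commute.one_left _).smul_left μ)
  intro x hx
  obtain ⟨k, hk⟩ := (f.mem_maxGenEigenspace μ x).1 hx
  refine (f.mem_maxGenEigenspace μ (g x)).2 ⟨k + 1, ?_⟩
  have hk1 : (f' ^ (k + 1)) x = 0 := by rw [pow_succ', mul_apply, hk, map_zero]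
  have key := LinearMap.congr_fun (mul_pow_succ_sub_pow_succ_mul hf' k) x
  rwa [LinearMap.sub_apply, LinearMap.smul_apply, mul_apply, mul_apply, mul_apply, hk, hk1,
    map_zero, map_zero, smul_zero, zero_sub, neg_eq_zero] at key

end Module.End

namespace PoissonAlgebra

variable {F P : Type*} [Field F] [AddCommGroup P] [Module F P] (Q : PoissonAlgebra F P)

theorem commute_mul_mul (a b : P) :
    Commute (Q.mul a : Module.End F P) (Q.mul b) := by
  ext z
  change Q.mul a (Q.mul b z) = Q.mul b (Q.mul a z)
  rw [← Q.mul_assoc, Q.mul_comm a b, Q.mul_assoc]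

theorem commute_mul_mul_flip (a y : P) :
    Commute (Q.mul a : Module.End F P) (Q.mul.flip y) := by
  ext z
  exact (Q.mul_assoc a z y).symm

theorem bracket_flip_mul_sub_mul_bracket_flip (a y : P) :
    (Q.bracket.flip y : Module.End F P) * Q.mul a - Q.mul a * Q.bracket.flip y
      = Q.mul (Q.bracket a y) := by
  ext z
  change Q.bracket (Q.mul a z) y - Q.mul a (Q.bracket z y) = Q.mul (Q.bracket a y) z
  rw [Q.leibniz, add_sub_cancel_right]

end PoissonAlgebra

/-- The Fitting null component `E_P^A(a)` of left multiplication by `a` is a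
Poisson subalgebra. -/
theorem engel_assoc_subalgebra {F P : Type*} [Field F] [AddCommGroup P] [Module F P]
    (Q : PoissonAlgebra F P) (a : P) :
    let E : Set P := {x | ∃ n : ℕ, ((Q.mul a : Module.End F P) ^ n) x = 0}
    (∀ x ∈ E, ∀ y ∈ E, x + y ∈ E) ∧ (∀ (c : F), ∀ x ∈ E, c • x ∈ E) ∧
    (∀ x ∈ E, ∀ y ∈ E, Q.mul x y ∈ E ∧ Q.bracket x y ∈ E) := by
  intro E
  have hE : E = Module.End.maxGenEigenspace (Q.mul a) 0 := by
    ext x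
    simp only [E, Module.End.mem_maxGenEigenspace, zero_smul, sub_zero, Set.mem_ofPred_eq,
      SetLike.mem_coe]
  rw [hE]
  refine ⟨fun x hx y hy => add_mem hx hy, fun c x hx => Submodule.smul_mem _ c hx,
    fun x hx y _ => ⟨?_, ?_⟩⟩
  · exact Module.End.mapsTo_maxGenEigenspace_of_comm (Q.commute_mul_mul_flip a y) 0 hx
  · refine Module.End.mapsTo_maxGenEigenspace_of_commute_commutator
      (g := Q.bracket.flip y) ?_ 0 hx
    rw [Q.bracket_flip_mul_sub_mul_bracket_flip]
    exact Q.commute_mul_mul a _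
end

section
/- Let P be a Poisson algebra and a ∈ P. Then E_P^L(a) = {x ∈ P : (ad a)^n(x) = 0 for some n}, where ad a = [a, -], is a Poisson subalgebra of P, i.e., closed under both the associative product and the Lie bracket. -/
/-!  Framework: dialgebras and Poisson algebras as bilinear structures on a module. -/

variable {F P : Type*} [Field F] [AddCommGroup P] [Module F P]

/-!
`[a, -]` is a derivation of the product (Leibniz rule plus antisymmetry) and of the bracket
(Jacobi identity). For a derivation `D` of a bilinear product `p`, `D^i x = 0` and `D^j y = 0` force
`D^(i+j) (p x y) = 0`: apply `D` once and induct on `i` and `j`.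
-/

namespace Module.End

variable {R M : Type*} [CommSemiring R] [AddCommMonoid M] [Module R M]

def IsDerivationOf (D : Module.End R M) (p : M →ₗ[R] M →ₗ[R] M) : Prop :=
  ∀ x y, D (p x y) = p (D x) y + p x (D y)

theorem IsDerivationOf.pow_add_apply_eq_zero {D : Module.End R M} {p : M →ₗ[R] M →ₗ[R] M}
    (hD : D.IsDerivationOf p) {i j : ℕ} {x y : M} (hx : (D ^ i) x = 0) (hy : (D ^ j) y = 0) :
    (D ^ (i + j)) (p x y) = 0 := by
  induction i generalizing x j y with
  | zero => simp_all
  | succ i ihi =>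
    induction j generalizing y with
    | zero => simp_all
    | succ j ihj =>
      have hDx : (D ^ i) (D x) = 0 := by rwa [← mul_apply, ← pow_succ]
      have hDy : (D ^ j) (D y) = 0 := by rwa [← mul_apply, ← pow_succ]
      calc (D ^ (i + 1 + (j + 1))) (p x y)
          = (D ^ (i + (j + 1))) (p (D x) y) + (D ^ (i + 1 + j)) (p x (D y)) := by
            rw [show i + 1 + (j + 1) = i + 1 + j + 1 by omega, pow_succ, mul_apply, hD,
              map_add, show i + 1 + j = i + (j + 1) by omega]
        _ = 0 := by rw [ihi hDx hy, ihj hDy, add_zero]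

end Module.End

namespace PoissonAlgebra

variable {F P : Type*} [Field F] [AddCommGroup P] [Module F P] (Q : PoissonAlgebra F P)

theorem bracket_anticomm (x y : P) : Q.bracket x y = -Q.bracket y x := by
  have h := Q.lie_self (x + y)
  simp only [map_add, LinearMap.add_apply, Q.lie_self, zero_add, add_zero] at h
  exact eq_neg_of_add_eq_zero_right h

theorem ad_isDerivationOf_mul (a : P) :
    Module.End.IsDerivationOf (Q.bracket a) Q.mul := by
  intro x y
  simp only [Q.bracket_anticomm a, Q.leibniz, map_neg, LinearMap.neg_apply, neg_add]

theorem ad_isDerivationOf_bracket (a : P) :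
    Module.End.IsDerivationOf (Q.bracket a) Q.bracket :=
  Q.leibniz_lie a

end PoissonAlgebra

/-- The Fitting null component `E_P^L(a)` of `ad a = [a,-]` is a Poisson subalgebra. -/
theorem engel_lie_subalgebra {F P : Type*} [Field F] [AddCommGroup P] [Module F P]
    (Q : PoissonAlgebra F P) (a : P) :
    let E : Set P := {x | ∃ n : ℕ, ((Q.bracket a : Module.End F P) ^ n) x = 0}
    (∀ x ∈ E, ∀ y ∈ E, x + y ∈ E) ∧ (∀ (c : F), ∀ x ∈ E, c • x ∈ E) ∧
    (∀ x ∈ E, ∀ y ∈ E, Q.mul x y ∈ E ∧ Q.bracket x y ∈ E) := by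
  refine ⟨?_, ?_, ?_⟩
  · rintro x ⟨m, hm⟩ y ⟨n, hn⟩
    refine ⟨max m n, ?_⟩
    rw [map_add, Module.End.pow_map_zero_of_le (le_max_left m n) hm,
      Module.End.pow_map_zero_of_le (le_max_right m n) hn, add_zero]
  · rintro c x ⟨m, hm⟩
    exact ⟨m, by rw [map_smul, hm, smul_zero]⟩
  · rintro x ⟨m, hm⟩ y ⟨n, hn⟩
    exact ⟨⟨m + n, (Q.ad_isDerivationOf_mul a).pow_add_apply_eq_zero hm hn⟩,
      ⟨m + n, (Q.ad_isDerivationOf_bracket a).pow_add_apply_eq_zero hm hn⟩⟩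
end

section
/- Let B be an ideal of a finite-dimensional dialgebra A with B·B + [B,B] = 0 (a zero ideal) and B ∩ φ(A) = 0. Then A splits over B: there is a subalgebra C of A with A = B ⊕ C as vector spaces. -/
/-!  Framework: dialgebras and Poisson algebras as bilinear structures on a module. -/

variable {F P : Type*} [Field F] [AddCommGroup P] [Module F P]

/-!
Choose a subalgebra `C` minimal with `B + C = A`. Because `B` is a zero ideal and `A = B + C`,
`B ∩ C` is an ideal of `A`. If a maximal subalgebra `M` did not contain `B ∩ C`, then
`M + B ∩ C = A`, hence `C = B ∩ C + M ∩ C` by modularity, so `M ∩ C` would be a smaller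
supplement of `B`. Thus `B ∩ C ⊆ φ(A) ∩ B = 0`.
-/

namespace Dialgebra

variable (D : Dialgebra F P)

lemma psq_eq_map₂ (X Y : Submodule F P) :
    D.psq X Y = Submodule.map₂ D.mul X Y ⊔ Submodule.map₂ D.bracket X Y := by
  rw [psq, pmul, pbra, Submodule.map₂_eq_span_image2, Submodule.map₂_eq_span_image2]

lemma psq_mono {X₁ X₂ Y₁ Y₂ : Submodule F P} (hX : X₁ ≤ X₂) (hY : Y₁ ≤ Y₂) :
    D.psq X₁ Y₁ ≤ D.psq X₂ Y₂ := by
  simp only [psq_eq_map₂]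
  exact sup_le_sup (Submodule.map₂_le_map₂ hX hY) (Submodule.map₂_le_map₂ hX hY)

lemma psq_sup_left (X₁ X₂ Y : Submodule F P) :
    D.psq (X₁ ⊔ X₂) Y = D.psq X₁ Y ⊔ D.psq X₂ Y := by
  simp only [psq_eq_map₂, Submodule.map₂_sup_left]
  ac_rfl

lemma psq_sup_right (X Y₁ Y₂ : Submodule F P) :
    D.psq X (Y₁ ⊔ Y₂) = D.psq X Y₁ ⊔ D.psq X Y₂ := by
  simp only [psq_eq_map₂, Submodule.map₂_sup_right]
  ac_rfl

lemma isIdeal_iff_psq_le {I : Submodule F P} :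
    D.IsIdeal I ↔ D.psq I ⊤ ≤ I ∧ D.psq ⊤ I ≤ I := by
  simp only [IsIdeal, psq, sup_le_iff]
  tauto

lemma IsSubalgebra.inf {M C : Submodule F P} (hM : D.IsSubalgebra M) (hC : D.IsSubalgebra C) :
    D.IsSubalgebra (M ⊓ C) :=
  le_inf ((D.psq_mono inf_le_left inf_le_left).trans hM)
    ((D.psq_mono inf_le_right inf_le_right).trans hC)

lemma IsSubalgebra.sup_of_isIdeal {M I : Submodule F P} (hM : D.IsSubalgebra M)
    (hI : D.IsIdeal I) : D.IsSubalgebra (M ⊔ I) := by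
  obtain ⟨hIA, hAI⟩ := (D.isIdeal_iff_psq_le).mp hI
  have hMI : D.psq M I ≤ I := (D.psq_mono le_top le_rfl).trans hAI
  have hIMI : D.psq I (M ⊔ I) ≤ I := (D.psq_mono le_rfl le_top).trans hIA
  rw [IsSubalgebra, psq_sup_left, psq_sup_right]
  exact sup_le (sup_le (hM.trans le_sup_left) (hMI.trans le_sup_right)) (hIMI.trans le_sup_right)

lemma isIdeal_inf_of_sup_eq_top {B C : Submodule F P} (hB : D.IsIdeal B)
    (hz : D.psq B B = ⊥) (hC : D.IsSubalgebra C) (hBC : B ⊔ C = ⊤) : D.IsIdeal (B ⊓ C) := by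
  obtain ⟨hBA, hAB⟩ := (D.isIdeal_iff_psq_le).mp hB
  rw [isIdeal_iff_psq_le, ← hBC, psq_sup_left, psq_sup_right]
  refine ⟨sup_le ?_ ?_, sup_le ?_ ?_⟩
  · exact (D.psq_mono inf_le_left le_rfl).trans (hz.le.trans bot_le)
  · exact le_inf ((D.psq_mono inf_le_left le_top).trans hBA)
      ((D.psq_mono inf_le_right le_rfl).trans hC)
  · exact (D.psq_mono le_rfl inf_le_left).trans (hz.le.trans bot_le)
  · exact le_inf ((D.psq_mono le_top inf_le_left).trans hAB)
      ((D.psq_mono le_rfl inf_le_right).trans hC)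

lemma le_frattini_of_minimal_supplement {B C I : Submodule F P}
    (hC : Minimal (fun C => D.IsSubalgebra C ∧ B ⊔ C = ⊤) C) (hI : D.IsIdeal I)
    (hIB : I ≤ B) (hIC : I ≤ C) : I ≤ D.frattini := by
  refine le_inf le_top (le_sInf fun M hM => ?_)
  rcases hM.2.2 (M ⊔ I) (hM.1.sup_of_isIdeal D hI) le_sup_left le_top with hMI | hMI
  · exact hMI ▸ le_sup_right
  · have hC_eq : C = I ⊔ M ⊓ C := by
      rw [← sup_inf_assoc_of_le M hIC, sup_comm, hMI, top_inf_eq]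
    have hMC : B ⊔ M ⊓ C = ⊤ := by
      refine top_le_iff.mp (hC.prop.2 ▸ sup_le le_sup_left ?_)
      exact hC_eq.le.trans (sup_le_sup_right hIB _)
    have hCM : C ≤ M ⊓ C := hC.le_of_le ⟨hM.1.inf D hC.prop.1, hMC⟩ inf_le_right
    exact hIC.trans (hCM.trans inf_le_left)

lemma le_phi_of_le_frattini {I : Submodule F P} (hI : D.IsIdeal I) (hIφ : I ≤ D.frattini) :
    I ≤ D.phi :=
  le_sSup ⟨hI, hIφ⟩

end Dialgebra

/-- A zero ideal avoiding the Frattini ideal has a complementary subalgebra. -/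
theorem splits_over_zero_ideal {F P : Type*} [Field F] [AddCommGroup P] [Module F P]
    [FiniteDimensional F P] (D : Dialgebra F P) (B : Submodule F P)
    (hB : D.IsIdeal B) (hz : D.psq B B = ⊥) (hphi : B ⊓ D.phi = ⊥) :
    ∃ C, D.IsSubalgebra C ∧ B ⊓ C = ⊥ ∧ B ⊔ C = ⊤ := by
  obtain ⟨C, hC⟩ := exists_minimal_of_wellFoundedLT
    (fun C => D.IsSubalgebra C ∧ B ⊔ C = ⊤) ⟨⊤, le_top, sup_top_eq B⟩
  have hideal : D.IsIdeal (B ⊓ C) := D.isIdeal_inf_of_sup_eq_top hB hz hC.prop.1 hC.prop.2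
  have hφ : B ⊓ C ≤ D.phi := D.le_phi_of_le_frattini hideal
    (D.le_frattini_of_minimal_supplement hC hideal inf_le_left inf_le_right)
  exact ⟨C, hC.prop.1, le_bot_iff.mp (hphi ▸ le_inf inf_le_left hφ), hC.prop.2⟩
end
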